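/- Let (Ω, P) be a finite probability space, and let L⁻ : Ω → 𝓛 and L⁺ : Ω → 𝓕 be random variables taking values in finite sets. Define ℓ₁ ∼ ℓ₂ for configurations with positive probability iff P(L⁺ = a | L⁻ = ℓ₁) = P(L⁺ = a | L⁻ = ℓ₂) for all a ∈ 𝓕, and let ε(ℓ) := [ℓ]. Suppose η : 𝓛 → 𝒯 is any statistic that is predictively sufficient, i.e., P(L⁺ = a | L⁻ = ℓ) = P(L⁺ = a | η(L⁻) = η(ℓ)) for every ℓ with P(L⁻ = ℓ) > 0 and every a ∈ 𝓕. Then ε is a function of η on the support of L⁻: for all ℓ₁, ℓ₂ with positive probability, η(ℓ₁) = η(ℓ₂) implies ε(ℓ₁) = ε(ℓ₂); equivalently, there exists f : 𝒯 → 𝓛/∼ with ε(ℓ) = f(η(ℓ)) for all ℓ in the support of L⁻. -/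
import Mathlib


open scoped Classical

/-- Probability of an event `A` under a pmf `P` on a finite sample space. -/
noncomputable def pr {Ω : Type*} [Fintype Ω] (P : Ω → ℝ) (A : Ω → Prop) : ℝ :=
  ∑ ω, if A ω then P ω else 0

/-- Conditional probability `P(A | B)` (with the `0/0 = 0` convention). -/
noncomputable def cpr {Ω : Type*} [Fintype Ω] (P : Ω → ℝ) (A B : Ω → Prop) : ℝ :=
  pr P (fun ω => A ω ∧ B ω) / pr P B

/-- Predictive equivalence (Definition 1): two past configurations are equivalent iff they
induce the same conditional distribution `cond` over futures. -/
def predSetoid {𝓛 𝓕 : Type*} (cond : 𝓛 → 𝓕 → ℝ) : Setoid 𝓛 :=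
  ⟨fun l₁ l₂ => ∀ a, cond l₁ a = cond l₂ a,
   ⟨fun _ _ => rfl, fun h a => (h a).symm, fun h₁ h₂ a => (h₁ a).trans (h₂ a)⟩⟩

/-- **Minimality of the predictive states.** If `η` is any predictively sufficient statistic,
i.e. `P(L⁺ = a | L⁻ = ℓ) = P(L⁺ = a | η(L⁻) = η(ℓ))` for all `ℓ` in the support of `L⁻` and
all `a`, then `ε` is a function of `η` on the support of `L⁻`: `η ℓ₁ = η ℓ₂` implies
`ε ℓ₁ = ε ℓ₂`, and there is `f` with `ε ℓ = f (η ℓ)` on the support. -/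
theorem predictive_state_minimal
    {Ω 𝓛 𝓕 𝒯 : Type*} [Fintype Ω] [Fintype 𝓛] [Fintype 𝓕]
    (P : Ω → ℝ) (hP0 : ∀ ω, 0 ≤ P ω) (hP1 : ∑ ω, P ω = 1)
    (Lminus : Ω → 𝓛) (Lplus : Ω → 𝓕) (η : 𝓛 → 𝒯)
    (hη : ∀ l : 𝓛, 0 < pr P (fun ω => Lminus ω = l) → ∀ a : 𝓕,
      cpr P (fun ω => Lplus ω = a) (fun ω => Lminus ω = l) =
        cpr P (fun ω => Lplus ω = a) (fun ω => η (Lminus ω) = η l)) :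
    (∀ l₁ l₂ : 𝓛, 0 < pr P (fun ω => Lminus ω = l₁) →
      0 < pr P (fun ω => Lminus ω = l₂) → η l₁ = η l₂ →
      Quotient.mk
          (predSetoid fun l' a' =>
            cpr P (fun ω' => Lplus ω' = a') (fun ω' => Lminus ω' = l')) l₁ =
        Quotient.mk _ l₂) ∧
    ∃ f : 𝒯 → Quotient
        (predSetoid fun l' a' =>
          cpr P (fun ω' => Lplus ω' = a') (fun ω' => Lminus ω' = l')),
      ∀ l : 𝓛, 0 < pr P (fun ω => Lminus ω = l) →
        Quotient.mk _ l = f (η l) := by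
  have key : ∀ l₁ l₂ : 𝓛, 0 < pr P (fun ω => Lminus ω = l₁) →
      0 < pr P (fun ω => Lminus ω = l₂) → η l₁ = η l₂ →
      Quotient.mk
          (predSetoid fun l' a' =>
            cpr P (fun ω' => Lplus ω' = a') (fun ω' => Lminus ω' = l')) l₁ =
        Quotient.mk _ l₂ := by
    intro l₁ l₂ h₁ h₂ hη12
    apply Quotient.sound
    intro a
    show cpr P (fun ω' => Lplus ω' = a) (fun ω' => Lminus ω' = l₁) =
      cpr P (fun ω' => Lplus ω' = a) (fun ω' => Lminus ω' = l₂)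
    rw [hη l₁ h₁ a, hη l₂ h₂ a, hη12]
  refine ⟨key, ?_⟩
  have hΩ : Nonempty Ω := by
    by_contra h
    rw [not_nonempty_iff] at h
    simp [Finset.sum_empty, Finset.univ_eq_empty] at hP1
  obtain ⟨ω₀⟩ := hΩ
  refine ⟨fun t => if h : ∃ l, 0 < pr P (fun ω => Lminus ω = l) ∧ η l = t then
      Quotient.mk _ h.choose else Quotient.mk _ (Lminus ω₀), ?_⟩
  intro l hl
  have hex : ∃ l', 0 < pr P (fun ω => Lminus ω = l') ∧ η l' = η l := ⟨l, hl, rfl⟩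
  simp only []
  rw [dif_pos hex]
  exact key l hex.choose hl hex.choose_spec.1 hex.choose_spec.2.symm
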